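/- arXiv:1610.05387 — 6 statements merged into one kernel-verified Lean document; each statement's English description precedes it below -/
import Mathlib

section
/- For all integers k ≥ 1 and j ≥ 1, the sums S_{k,j}(1) satisfy the recurrence relation S_{k,j}(1) = j^2 · S_{k-1,j}(1) − 2j(2j−1) · S_{k-1,j-1}(1), where S_{k-1,0}(1) is interpreted as the empty sum 0. -/
/-- `S k j` is the sum `S_{k,j}(1) = ∑_{q=0}^{j-1} binom(2j, q) (j-q)^{2k+1}`,
viewed as an integer. For `j = 0` it is the empty sum `0`. -/
def S (k j : ℕ) : ℤ :=
  ∑ q ∈ Finset.range j, (Nat.choose (2 * j) q : ℤ) * ((j : ℤ) - (q : ℤ)) ^ (2 * k + 1)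

theorem recurrence_for_S_kj_one (k j : ℕ) (hk : 1 ≤ k) (hj : 1 ≤ j) :
    S k j = (j : ℤ) ^ 2 * S (k - 1) j - 2 * (j : ℤ) * (2 * (j : ℤ) - 1) * S (k - 1) (j - 1) := by
  obtain ⟨m, rfl⟩ : ∃ m, k = m + 1 := ⟨k - 1, by omega⟩
  obtain ⟨n, rfl⟩ : ∃ n, j = n + 1 := ⟨j - 1, by omega⟩
  simp only [S, Nat.add_sub_cancel]
  have hb : ∀ r ∈ Finset.range n,
      ((Nat.choose (2 * (n + 1)) (r + 1) : ℤ)) * ((r : ℤ) + 1) * (2 * ((n : ℤ) + 1) - ((r : ℤ) + 1))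
        = (2 * ((n : ℤ) + 1)) * (2 * ((n : ℤ) + 1) - 1) * (Nat.choose (2 * n) r : ℤ) := by
    intro r hr
    have hr' : r < n := Finset.mem_range.mp hr
    have h1 : (2 * n + 2) * Nat.choose (2 * n + 1) r = Nat.choose (2 * n + 2) (r + 1) * (r + 1) := by
      have := Nat.add_one_mul_choose_eq (2 * n + 1) r
      simpa using this
    have h2 : Nat.choose (2 * n) r * (2 * n + 1) = Nat.choose (2 * n + 1) r * (2 * n + 1 - r) := by
      simpa using Nat.choose_mul_succ_eq (2 * n) r
    have hnat : Nat.choose (2 * n + 2) (r + 1) * (r + 1) * (2 * n + 1 - r)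
        = (2 * n + 2) * (2 * n + 1) * Nat.choose (2 * n) r := by
      calc Nat.choose (2 * n + 2) (r + 1) * (r + 1) * (2 * n + 1 - r)
          = (2 * n + 2) * (Nat.choose (2 * n + 1) r * (2 * n + 1 - r)) := by rw [← h1]; ring
        _ = (2 * n + 2) * (Nat.choose (2 * n) r * (2 * n + 1)) := by rw [h2]
        _ = (2 * n + 2) * (2 * n + 1) * Nat.choose (2 * n) r := by ring
    have hle : r ≤ 2 * n + 1 := by omega
    have := congrArg (fun x : ℕ => (x : ℤ)) hnat
    push_cast [Nat.cast_sub hle] at this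
    have h2n : (2 * (n + 1) : ℕ) = 2 * n + 2 := by ring
    rw [h2n]
    linarith [this]
  have key : ∑ q ∈ Finset.range (n + 1),
        (Nat.choose (2 * (n + 1)) q : ℤ) * (((n : ℤ) + 1) - (q : ℤ)) ^ (2 * m + 1)
          * ((q : ℤ) * (2 * ((n : ℤ) + 1) - (q : ℤ)))
      = (2 * ((n : ℤ) + 1)) * (2 * ((n : ℤ) + 1) - 1)
          * ∑ q ∈ Finset.range n, (Nat.choose (2 * n) q : ℤ) * ((n : ℤ) - (q : ℤ)) ^ (2 * m + 1) := by
    rw [Finset.sum_range_succ']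
    rw [Finset.mul_sum]
    have hz : (Nat.choose (2 * (n + 1)) 0 : ℤ) * (((n : ℤ) + 1) - ((0 : ℕ) : ℤ)) ^ (2 * m + 1)
        * (((0 : ℕ) : ℤ) * (2 * ((n : ℤ) + 1) - ((0 : ℕ) : ℤ))) = 0 := by
      push_cast; ring
    rw [hz, add_zero]
    refine Finset.sum_congr rfl fun r hr => ?_
    have := hb r hr
    push_cast
    push_cast at this
    linear_combination (((n : ℤ) + 1 - ((r : ℤ) + 1)) ^ (2 * m + 1)) * this
  have expand : ∀ q ∈ Finset.range (n + 1),
      ((n : ℤ) + 1) ^ 2 * ((Nat.choose (2 * (n + 1)) q : ℤ) * (((n : ℤ) + 1) - (q : ℤ)) ^ (2 * m + 1))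
        - (Nat.choose (2 * (n + 1)) q : ℤ) * (((n : ℤ) + 1) - (q : ℤ)) ^ (2 * (m + 1) + 1)
      = (Nat.choose (2 * (n + 1)) q : ℤ) * (((n : ℤ) + 1) - (q : ℤ)) ^ (2 * m + 1)
          * ((q : ℤ) * (2 * ((n : ℤ) + 1) - (q : ℤ))) := by
    intro q hq
    have hpow : (((n : ℤ) + 1) - (q : ℤ)) ^ (2 * (m + 1) + 1)
        = (((n : ℤ) + 1) - (q : ℤ)) ^ (2 * m + 1) * (((n : ℤ) + 1) - (q : ℤ)) ^ 2 := by
      rw [← pow_add]; ring_nf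
    rw [hpow]; ring
  have hsum : ((n : ℤ) + 1) ^ 2 * ∑ q ∈ Finset.range (n + 1),
        (Nat.choose (2 * (n + 1)) q : ℤ) * (((n : ℤ) + 1) - (q : ℤ)) ^ (2 * m + 1)
      - ∑ q ∈ Finset.range (n + 1),
        (Nat.choose (2 * (n + 1)) q : ℤ) * (((n : ℤ) + 1) - (q : ℤ)) ^ (2 * (m + 1) + 1)
      = (2 * ((n : ℤ) + 1)) * (2 * ((n : ℤ) + 1) - 1)
          * ∑ q ∈ Finset.range n, (Nat.choose (2 * n) q : ℤ) * ((n : ℤ) - (q : ℤ)) ^ (2 * m + 1) := by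
    rw [Finset.mul_sum, ← Finset.sum_sub_distrib, ← key]
    exact Finset.sum_congr rfl expand
  push_cast
  push_cast at hsum
  linarith [hsum]
end

section
/- For all integers k ≥ 0 and n ≥ 1, one has Σ_{1 ≤ λ₁ ≤ λ₂ ≤ 2n} ( λ₁^{2k+1} + (λ₂ − n)^{2k+1} ) = s_{k,2}(n) + 2(n+1) · Σ_{q=1}^{n} q^{2k+1}, where the left-hand sum ranges over all pairs of integers (λ₁, λ₂) with 1 ≤ λ₁ ≤ λ₂ ≤ 2n and (λ₂ − n)^{2k+1} is computed in the integers (so it may be negative). -/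
/-- `C n j q` is the coefficient `C_{j,q}(n)` of `a^{q+j}` in `(∑_{i=0}^{n-1} a^{i+1})^j`. -/
noncomputable def C (n j q : ℕ) : ℕ :=
  Polynomial.coeff ((∑ i ∈ Finset.range n, (Polynomial.X : Polynomial ℕ) ^ (i + 1)) ^ j) (q + j)

/-- `s k j n = s_{k,j}(n) = ∑_{q=0}^{j(n-1)} C_{j,q}(n) (j+q)^{2k+1}`. -/
noncomputable def s (k j n : ℕ) : ℕ :=
  ∑ q ∈ Finset.range (j * (n - 1) + 1), C n j q * (j + q) ^ (2 * k + 1)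

open Finset

lemma aux_sum_Icc_one {M : Type*} [AddCommMonoid M] (f : ℕ → M) (m : ℕ) :
    ∑ t ∈ Icc 1 m, f t = ∑ i ∈ range m, f (i + 1) := by
  rw [← Finset.Ico_add_one_right_eq_Icc, Finset.sum_Ico_eq_sum_range]
  simp [Nat.add_comm]

lemma aux_poly (n : ℕ) :
    ((∑ i ∈ range n, (Polynomial.X : Polynomial ℕ) ^ (i + 1)) ^ 2)
      = ∑ i ∈ range n, ∑ j ∈ range n, (Polynomial.X : Polynomial ℕ) ^ (i + j + 2) := by
  rw [sq, Finset.sum_mul_sum]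
  refine Finset.sum_congr rfl fun i _ => Finset.sum_congr rfl fun j _ => ?_
  rw [← pow_add]
  ring_nf

lemma aux_C (n q : ℕ) :
    C n 2 q = ∑ i ∈ range n, ∑ j ∈ range n, if i + j = q then 1 else 0 := by
  rw [C, aux_poly]
  rw [Polynomial.finset_sum_coeff]
  refine Finset.sum_congr rfl fun i _ => ?_
  rw [Polynomial.finset_sum_coeff]
  refine Finset.sum_congr rfl fun j _ => ?_
  rw [Polynomial.coeff_X_pow]
  simp [Nat.add_right_cancel_iff, eq_comm]

lemma aux_s (k n : ℕ) (hn : 1 ≤ n) :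
    s k 2 n = ∑ i ∈ range n, ∑ j ∈ range n, (i + j + 2) ^ (2 * k + 1) := by
  rw [s]
  simp only [aux_C, Finset.sum_mul, ite_mul, zero_mul, one_mul]
  rw [Finset.sum_comm]
  refine Finset.sum_congr rfl fun i hi => ?_
  rw [Finset.sum_comm]
  refine Finset.sum_congr rfl fun j hj => ?_
  have hij : i + j ∈ range (2 * (n - 1) + 1) := by
    simp only [Finset.mem_range] at *
    omega
  rw [Finset.sum_ite_eq (range (2 * (n - 1) + 1)) (i + j) (fun q => (2 + q) ^ (2 * k + 1))]
  rw [if_pos hij]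
  ring_nf

/-- key induction: ∑_{i=1}^n F(i) + ∑_{m=1}^n m^{2k+2} = (n+1) F(n). -/
lemma aux_key (k : ℕ) : ∀ n : ℕ,
    (∑ i ∈ Icc 1 n, ∑ t ∈ Icc 1 i, (t : ℤ) ^ (2 * k + 1))
      + ∑ m ∈ Icc 1 n, (m : ℤ) ^ (2 * k + 2)
      = ((n : ℤ) + 1) * ∑ t ∈ Icc 1 n, (t : ℤ) ^ (2 * k + 1) := by
  intro n
  induction n with
  | zero => simp
  | succ n ih =>
    rw [Finset.sum_Icc_succ_top (by omega : 1 ≤ n + 1)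
        (fun i => ∑ t ∈ Icc 1 i, (t : ℤ) ^ (2 * k + 1)),
      Finset.sum_Icc_succ_top (by omega : 1 ≤ n + 1) (fun m => (m : ℤ) ^ (2 * k + 2)),
      Finset.sum_Icc_succ_top (by omega : 1 ≤ n + 1) (fun t => (t : ℤ) ^ (2 * k + 1))]
    push_cast
    rw [show ((n : ℤ) + 1) ^ (2 * k + 2) = ((n : ℤ) + 1) * ((n : ℤ) + 1) ^ (2 * k + 1) by ring]
    linear_combination ih

lemma aux_S2G (k n : ℕ) :
    ∑ l2 ∈ Icc 1 (2 * n), (l2 : ℤ) * ((l2 : ℤ) - (n : ℤ)) ^ (2 * k + 1)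
      = 2 * ∑ m ∈ Icc 1 n, (m : ℤ) ^ (2 * k + 2) := by
  have h0 : ∑ l2 ∈ Icc 1 (2 * n), (l2 : ℤ) * ((l2 : ℤ) - (n : ℤ)) ^ (2 * k + 1)
      = ∑ i ∈ range (2 * n + 1), (i : ℤ) * ((i : ℤ) - (n : ℤ)) ^ (2 * k + 1) := by
    rw [aux_sum_Icc_one (fun l2 => (l2 : ℤ) * ((l2 : ℤ) - (n : ℤ)) ^ (2 * k + 1)) (2 * n),
      Finset.sum_range_succ' (fun i => (i : ℤ) * ((i : ℤ) - (n : ℤ)) ^ (2 * k + 1)) (2 * n)]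
    simp
  -- reflection: S + S = ∑ 2 (i-n)^{2k+2}
  have hrefl := Finset.sum_range_reflect
    (fun i => (i : ℤ) * ((i : ℤ) - (n : ℤ)) ^ (2 * k + 1)) (2 * n + 1)
  have hS2 : (2 : ℤ) * ∑ i ∈ range (2 * n + 1), (i : ℤ) * ((i : ℤ) - (n : ℤ)) ^ (2 * k + 1)
      = 2 * ∑ i ∈ range (2 * n + 1), ((i : ℤ) - (n : ℤ)) ^ (2 * k + 2) := by
    rw [two_mul]
    nth_rewrite 1 [← hrefl]
    rw [Finset.mul_sum, ← Finset.sum_add_distrib]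
    refine Finset.sum_congr rfl fun i hi => ?_
    have hi' : i < 2 * n + 1 := Finset.mem_range.mp hi
    have hc : ((2 * n + 1 - 1 - i : ℕ) : ℤ) = 2 * (n : ℤ) - (i : ℤ) := by omega
    rw [hc]
    have hodd : Odd (2 * k + 1) := ⟨k, by ring⟩
    have : (2 * (n : ℤ) - (i : ℤ) - (n : ℤ)) ^ (2 * k + 1)
        = -(((i : ℤ) - (n : ℤ)) ^ (2 * k + 1)) := by
      rw [show 2 * (n : ℤ) - (i : ℤ) - (n : ℤ) = -((i : ℤ) - (n : ℤ)) by ring,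
        hodd.neg_pow]
    rw [this]
    rw [show (2*k+2) = (2*k+1)+1 by ring, pow_succ]
    ring
  -- ∑_{i<2n+1} (i-n)^{2k+2} = 2 ∑_{m∈Icc 1 n} m^{2k+2}
  have hE : ∑ i ∈ range (2 * n + 1), ((i : ℤ) - (n : ℤ)) ^ (2 * k + 2)
      = 2 * ∑ m ∈ Icc 1 n, (m : ℤ) ^ (2 * k + 2) := by
    rw [show 2 * n + 1 = n + (n + 1) by ring, Finset.sum_range_add]
    have h1 : ∑ i ∈ range (n + 1), (((n + i : ℕ) : ℤ) - (n : ℤ)) ^ (2 * k + 2)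
        = ∑ m ∈ Icc 1 n, (m : ℤ) ^ (2 * k + 2) := by
      rw [aux_sum_Icc_one (fun m => (m : ℤ) ^ (2 * k + 2)) n]
      rw [Finset.sum_range_succ' (fun i => (((n + i : ℕ) : ℤ) - (n : ℤ)) ^ (2 * k + 2)) n]
      have hz : ((n + 0 : ℕ) : ℤ) - (n : ℤ) = 0 := by push_cast; ring
      rw [hz, zero_pow (by omega), add_zero]
      refine Finset.sum_congr rfl fun i _ => ?_
      push_cast
      ring
    have h2 : ∑ i ∈ range n, ((i : ℤ) - (n : ℤ)) ^ (2 * k + 2)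
        = ∑ m ∈ Icc 1 n, (m : ℤ) ^ (2 * k + 2) := by
      rw [aux_sum_Icc_one (fun m => (m : ℤ) ^ (2 * k + 2)) n]
      rw [← Finset.sum_range_reflect (fun i => ((i : ℤ) - (n : ℤ)) ^ (2 * k + 2)) n]
      refine Finset.sum_congr rfl fun i hi => ?_
      have hi' : i < n := Finset.mem_range.mp hi
      have hc : ((n - 1 - i : ℕ) : ℤ) = (n : ℤ) - 1 - (i : ℤ) := by omega
      rw [hc]
      have heven : Even (2 * k + 2) := ⟨k + 1, by ring⟩
      rw [show (n : ℤ) - 1 - (i : ℤ) - (n : ℤ) = -((i : ℤ) + 1) by ring]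
      rw [heven.neg_pow]
      push_cast
      ring
    rw [h1, h2]
    ring
  rw [h0]
  linarith [hS2, hE]

theorem tilde_S_k2_eq (k n : ℕ) (hn : 1 ≤ n) :
    (∑ l2 ∈ Finset.Icc 1 (2 * n), ∑ l1 ∈ Finset.Icc 1 l2,
        ((l1 : ℤ) ^ (2 * k + 1) + ((l2 : ℤ) - (n : ℤ)) ^ (2 * k + 1)))
      = (s k 2 n : ℤ) + 2 * ((n : ℤ) + 1) * ∑ q ∈ Finset.Icc 1 n, (q : ℤ) ^ (2 * k + 1) := by
  -- Step 1: inner sum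
  have step1 : ∀ l2 : ℕ, ∑ l1 ∈ Finset.Icc 1 l2,
      ((l1 : ℤ) ^ (2 * k + 1) + ((l2 : ℤ) - (n : ℤ)) ^ (2 * k + 1))
      = (∑ l1 ∈ Finset.Icc 1 l2, (l1 : ℤ) ^ (2 * k + 1))
        + (l2 : ℤ) * ((l2 : ℤ) - (n : ℤ)) ^ (2 * k + 1) := by
    intro l2
    rw [Finset.sum_add_distrib, Finset.sum_const, Nat.card_Icc]
    simp [nsmul_eq_mul]
  simp only [step1]
  rw [Finset.sum_add_distrib, aux_S2G]
  -- Step 2: split A = ∑_{l2 ≤ 2n} F l2 into two halves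
  have hA : ∑ l2 ∈ Finset.Icc 1 (2 * n), (∑ l1 ∈ Finset.Icc 1 l2, (l1 : ℤ) ^ (2 * k + 1))
      = (∑ i ∈ range n, ∑ l1 ∈ Finset.Icc 1 (i + 1), (l1 : ℤ) ^ (2 * k + 1))
        + ∑ i ∈ range n, ∑ l1 ∈ Finset.Icc 1 (n + i + 1), (l1 : ℤ) ^ (2 * k + 1) := by
    rw [aux_sum_Icc_one (fun m => ∑ l1 ∈ Finset.Icc 1 m, (l1 : ℤ) ^ (2 * k + 1)) (2 * n)]
    rw [show 2 * n = n + n by ring, Finset.sum_range_add]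
  rw [hA]
  -- Step 3: rewrite s
  have hs : (s k 2 n : ℤ) = ∑ i ∈ range n,
      ((∑ l1 ∈ Finset.Icc 1 (n + i + 1), (l1 : ℤ) ^ (2 * k + 1))
        - ∑ l1 ∈ Finset.Icc 1 (i + 1), (l1 : ℤ) ^ (2 * k + 1)) := by
    rw [aux_s k n hn]
    push_cast
    refine Finset.sum_congr rfl fun i hi => ?_
    have hdiff : ∑ l1 ∈ Finset.Icc 1 (n + i + 1), (l1 : ℤ) ^ (2 * k + 1)
        = (∑ l1 ∈ Finset.Icc 1 (i + 1), (l1 : ℤ) ^ (2 * k + 1))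
          + ∑ j ∈ range n, ((i : ℤ) + (j : ℤ) + 2) ^ (2 * k + 1) := by
      rw [← Finset.Ico_add_one_right_eq_Icc, ← Finset.Ico_add_one_right_eq_Icc,
        ← Finset.sum_Ico_consecutive (fun l1 => (l1 : ℤ) ^ (2 * k + 1))
          (by omega : 1 ≤ i + 1 + 1) (by omega : i + 1 + 1 ≤ n + i + 1 + 1)]
      congr 1
      rw [Finset.sum_Ico_eq_sum_range]
      have : n + i + 1 + 1 - (i + 1 + 1) = n := by omega
      rw [this]
      refine Finset.sum_congr rfl fun j hj => ?_
      push_cast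
      ring
    rw [hdiff]
    ring
  rw [hs, Finset.sum_sub_distrib]
  -- Step 4: reduce to aux_key
  have key := aux_key k n
  rw [aux_sum_Icc_one (fun i => ∑ t ∈ Icc 1 i, (t : ℤ) ^ (2 * k + 1)) n] at key
  linear_combination 2 * key
end

section
/- For all integers k ≥ 0 and n ≥ 1, one has s_{k,2}(n) = − Σ_{q=1}^{n} (2n − 2q + 2) · q^{2k+1} + Σ_{q=1}^{2n} (2n − q + 1) · q^{2k+1}. -/
/-!
Squaring `∑_{i<n} a^{i+1}` gives `s_{k,2}(n) = ∑_{i,j<n} (i+j+2)^{2k+1}`, and the formula holds with any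
function `g` in place of `q ↦ q^{2k+1}`: with partial sums `S m = ∑_{q<m} g (q+1)`, the sum over `j` is
`S (n+i+1) - S (i+1)`, while summation by parts turns each weighted sum on the right into a sum of
partial sums.
-/

open Finset

theorem sum_Icc_one_eq_sum_range {M : Type*} [AddCommMonoid M] (f : ℕ → M) (m : ℕ) :
    ∑ q ∈ Icc 1 m, f q = ∑ q ∈ range m, f (q + 1) := by
  rw [range_eq_Ico, sum_Ico_add', zero_add, Ico_add_one_right_eq_Icc]

section
variable {R : Type*}

open Polynomial in
theorem coeff_sum_X_pow_succ_sq [Semiring R] (n q : ℕ) :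
    ((∑ i ∈ range n, (X : R[X]) ^ (i + 1)) ^ 2).coeff q =
      ∑ i ∈ range n, ∑ j ∈ range n, if q = i + j + 2 then 1 else 0 := by
  simp only [sq, sum_mul_sum, ← pow_add, finsetSum_coeff, coeff_X_pow]
  exact sum_congr rfl fun i _ => sum_congr rfl fun j _ => by rw [add_add_add_comm]

variable [CommRing R]

theorem sum_range_sub_mul_eq_sum_partial_sums (f : ℕ → R) (m : ℕ) :
    ∑ q ∈ range m, ((m : R) - q) * f q = ∑ i ∈ range m, ∑ q ∈ range (i + 1), f q := by
  induction m with
  | zero => simp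
  | succ m ih =>
    simp only [sum_range_succ _ m, ← ih, Nat.cast_succ, add_sub_right_comm _ (1 : R), add_mul,
      one_mul, sum_add_distrib, sub_self, zero_mul]
    ring

theorem sum_range_sum_range_add_two (g : ℕ → R) (n : ℕ) :
    ∑ i ∈ range n, ∑ j ∈ range n, g (i + j + 2) =
      -∑ q ∈ Icc 1 n, (2 * (n : R) - 2 * q + 2) * g q
      + ∑ q ∈ Icc 1 (2 * n), (2 * (n : R) - q + 1) * g q := by
  set S : ℕ → R := fun m => ∑ q ∈ range m, g (q + 1)
  have hpairs (i : ℕ) : ∑ j ∈ range n, g (i + j + 2) = S (n + i + 1) - S (i + 1) := by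
    rw [show n + i + 1 = i + 1 + n by ring, sum_range_add_sub_sum_range]
    exact sum_congr rfl fun j _ => by ring_nf
  have hshort : ∑ q ∈ Icc 1 n, (2 * (n : R) - 2 * q + 2) * g q
      = 2 * ∑ i ∈ range n, S (i + 1) := by
    rw [sum_Icc_one_eq_sum_range, ← sum_range_sub_mul_eq_sum_partial_sums, mul_sum]
    refine sum_congr rfl fun q _ => ?_
    push_cast; ring
  have hlong : ∑ q ∈ Icc 1 (2 * n), (2 * (n : R) - q + 1) * g q
      = ∑ i ∈ range n, S (i + 1) + ∑ i ∈ range n, S (n + i + 1) := by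
    rw [← sum_range_add (fun i => S (i + 1)), ← two_mul, ← sum_range_sub_mul_eq_sum_partial_sums,
      sum_Icc_one_eq_sum_range]
    refine sum_congr rfl fun q _ => ?_
    push_cast; ring
  rw [sum_congr rfl fun i _ => hpairs i, hshort, hlong, sum_sub_distrib]
  ring

end

theorem s_two_eq_sum_range_sum_range (k n : ℕ) :
    s k 2 n = ∑ i ∈ range n, ∑ j ∈ range n, (i + j + 2) ^ (2 * k + 1) := by
  simp only [s, C, coeff_sum_X_pow_succ_sq, sum_mul, ite_mul, one_mul, zero_mul, add_left_inj]
  rw [sum_comm]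
  refine sum_congr rfl fun i hi => ?_
  rw [sum_comm]
  refine sum_congr rfl fun j hj => ?_
  rw [sum_ite_eq', if_pos]
  · ring
  · rw [mem_range] at hi hj ⊢
    omega

theorem s_k2_formula_general (k n : ℕ) :
    (s k 2 n : ℤ) =
      -∑ q ∈ Finset.Icc 1 n, (2 * (n : ℤ) - 2 * (q : ℤ) + 2) * (q : ℤ) ^ (2 * k + 1)
      + ∑ q ∈ Finset.Icc 1 (2 * n), (2 * (n : ℤ) - (q : ℤ) + 1) * (q : ℤ) ^ (2 * k + 1) := by
  rw [s_two_eq_sum_range_sum_range, ← sum_range_sum_range_add_two]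
  push_cast
  rfl

theorem s_k2_formula (k n : ℕ) (hn : 1 ≤ n) :
    (s k 2 n : ℤ) =
      -∑ q ∈ Finset.Icc 1 n, (2 * (n : ℤ) - 2 * (q : ℤ) + 2) * (q : ℤ) ^ (2 * k + 1)
      + ∑ q ∈ Finset.Icc 1 (2 * n), (2 * (n : ℤ) - (q : ℤ) + 1) * (q : ℤ) ^ (2 * k + 1) :=
  s_k2_formula_general k n
end

section
/- Faulhaber's theorem: for every integer k ≥ 1 there exists a polynomial F ∈ ℚ[t] such that for all integers n ≥ 1, Σ_{q=1}^{n} q^{2k+1} = F(n(n+1)). -/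
/-!
Write `u(n) = n(n+1)` and `S_p(n) = ∑_{q=1}^n q^p`. Since
`u(q)^{k+1} - u(q-1)^{k+1} = q^{k+1} ((q+1)^{k+1} - (q-1)^{k+1})` only involves the powers
`q^{k+1+m}` with `k+1-m` odd, telescoping gives `u^{k+1} = 2(k+1) S_{2k+1} + ∑_{m<k} c_m S_{k+1+m}`,
where every `S_{k+1+m}` with `c_m ≠ 0` is an odd power sum of lower index. By strong induction
every `S_{2k+1}` lies in the algebra generated by `u`.
-/

open Finset Polynomial

def centralDiffCoeff (k m : ℕ) : ℕ :=
  if Odd (k + 1 - m) then 2 * (k + 1).choose m else 0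

theorem centralDiffCoeff_self (k : ℕ) : centralDiffCoeff k k = 2 * (k + 1) := by
  simp [centralDiffCoeff]

theorem centralDiffCoeff_succ_self (k : ℕ) : centralDiffCoeff k (k + 1) = 0 := by
  simp [centralDiffCoeff]

def powerSum (R : Type*) [CommRing R] (p n : ℕ) : R :=
  ∑ q ∈ Icc 1 n, (q : R) ^ p

def triangular (R : Type*) [CommRing R] (n : ℕ) : R :=
  n * (n + 1)

section CommRing

variable {R : Type*} [CommRing R]

theorem pow_mul_sub_pow_eq_sum_centralDiffCoeff (x : R) (k : ℕ) :
    x ^ (k + 1) * ((x + 1) ^ (k + 1) - (x - 1) ^ (k + 1)) =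
      ∑ m ∈ range (k + 2), (centralDiffCoeff k m : R) * x ^ (k + 1 + m) := by
  rw [add_pow, sub_eq_add_neg x, add_pow, ← sum_sub_distrib, mul_sum]
  refine sum_congr rfl fun m _ => ?_
  rcases Nat.even_or_odd (k + 1 - m) with he | ho
  · simp [centralDiffCoeff, Nat.not_odd_iff_even.mpr he, he.neg_one_pow]
  · simp only [centralDiffCoeff, ho, if_true, ho.neg_one_pow, one_pow, mul_one]
    push_cast
    ring

theorem powerSum_succ (p n : ℕ) :
    powerSum R p (n + 1) = powerSum R p n + ((n + 1 : ℕ) : R) ^ p :=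
  sum_Icc_succ_top (Nat.le_add_left 1 n) _

theorem triangular_succ_pow_sub_triangular_pow (k n : ℕ) :
    triangular R (n + 1) ^ (k + 1) - triangular R n ^ (k + 1) =
      ∑ m ∈ range (k + 2), (centralDiffCoeff k m : R) * ((n + 1 : ℕ) : R) ^ (k + 1 + m) := by
  rw [← pow_mul_sub_pow_eq_sum_centralDiffCoeff, triangular, triangular, mul_pow, mul_pow]
  push_cast
  ring

theorem triangular_pow_eq_sum_powerSum (k n : ℕ) :
    triangular R n ^ (k + 1) =
      ∑ m ∈ range (k + 2), (centralDiffCoeff k m : R) * powerSum R (k + 1 + m) n := by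
  induction n with
  | zero => simp [triangular, powerSum]
  | succ n ih =>
    rw [← sub_add_cancel (triangular R (n + 1) ^ (k + 1)) (triangular R n ^ (k + 1)),
      triangular_succ_pow_sub_triangular_pow, ih, ← sum_add_distrib]
    simp only [powerSum_succ, mul_add, add_comm]

end CommRing

section Field

variable {K : Type*} [Field K] [CharZero K]

theorem powerSum_odd_mem_adjoin_triangular (k : ℕ) :
    powerSum K (2 * k + 1) ∈ Algebra.adjoin K {triangular K} := by
  induction k using Nat.strong_induction_on with
  | _ k ih =>
    have hsum : triangular K ^ (k + 1) = ∑ m ∈ range (k + 2),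
        (centralDiffCoeff k m : K) • powerSum K (k + 1 + m) := by
      funext n
      simpa only [Pi.pow_apply, Finset.sum_apply, Pi.smul_apply, smul_eq_mul]
        using triangular_pow_eq_sum_powerSum k n
    rw [sum_range_succ, sum_range_succ, centralDiffCoeff_succ_self, centralDiffCoeff_self,
      Nat.cast_zero, zero_smul, add_zero, show k + 1 + k = 2 * k + 1 by omega] at hsum
    have hlower : ∀ m ∈ range k,
        (centralDiffCoeff k m : K) • powerSum K (k + 1 + m) ∈ Algebra.adjoin K {triangular K} := by
      intro m hm
      by_cases hodd : Odd (k + 1 - m)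
      · have hm : m < k := mem_range.mp hm
        rw [show k + 1 + m = 2 * ((k + m) / 2) + 1 by obtain ⟨t, ht⟩ := hodd; omega]
        exact Subalgebra.smul_mem _ (ih _ (by omega)) _
      · simp [centralDiffCoeff, hodd]
    have htop : powerSum K (2 * k + 1) = ((2 * (k + 1) : ℕ) : K)⁻¹ •
        (triangular K ^ (k + 1) -
          ∑ m ∈ range k, (centralDiffCoeff k m : K) • powerSum K (k + 1 + m)) := by
      rw [hsum, add_sub_cancel_left, smul_smul, inv_mul_cancel₀ (Nat.cast_ne_zero.mpr (by omega)),
        one_smul]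
    rw [htop]
    exact Subalgebra.smul_mem _
      (sub_mem (pow_mem (Algebra.self_mem_adjoin_singleton K _) _) (sum_mem hlower)) _

end Field

theorem faulhaber_general (k : ℕ) :
    ∃ F : Polynomial ℚ, ∀ n : ℕ, 1 ≤ n →
      (∑ q ∈ Finset.Icc 1 n, (q : ℚ) ^ (2 * k + 1)) = F.eval ((n : ℚ) * ((n : ℚ) + 1)) := by
  obtain ⟨F, hF⟩ := Algebra.adjoin_singleton_eq_range_aeval ℚ (triangular ℚ) ▸
    powerSum_odd_mem_adjoin_triangular (K := ℚ) k
  refine ⟨F, fun n _ => ?_⟩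
  simpa [aeval_fn_apply, triangular, powerSum] using (congrFun hF n).symm

theorem faulhaber (k : ℕ) (hk : 1 ≤ k) :
    ∃ F : Polynomial ℚ, ∀ n : ℕ, 1 ≤ n →
      (∑ q ∈ Finset.Icc 1 n, (q : ℚ) ^ (2 * k + 1)) = F.eval ((n : ℚ) * ((n : ℚ) + 1)) :=
  faulhaber_general k
end

section
/- Jacobi's theorem: for every integer k ≥ 1 there exists a polynomial G ∈ ℚ[t] such that for all integers n ≥ 1, Σ_{q=1}^{n} q^{2k} = (2n+1) · G(n(n+1)). -/
lemma step_id (k : ℕ) (q : ℚ) :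
    (2*q+1)*(q*(q+1))^k - (2*q-1)*((q-1)*q)^k
      = ∑ j ∈ Finset.range (k+1), (k.choose j : ℚ) *
          (2*(1-(-1:ℚ)^(k-j))*q^(k+j+1) + (1+(-1:ℚ)^(k-j))*q^(k+j)) := by
  have h1 : (q+1)^k = ∑ j ∈ Finset.range (k+1), q^j * (k.choose j : ℚ) := by
    simpa using add_pow q 1 k
  have h2 : (q-1)^k = ∑ j ∈ Finset.range (k+1), q^j * (-1:ℚ)^(k-j) * (k.choose j : ℚ) := by
    have := add_pow q (-1) k
    simpa [sub_eq_add_neg] using this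
  have e1 : (q*(q+1))^k = q^k * (q+1)^k := by rw [mul_pow]
  have e2 : ((q-1)*q)^k = (q-1)^k * q^k := by rw [mul_pow]
  rw [e1, e2, h1, h2]
  simp only [Finset.mul_sum, Finset.sum_mul, ← Finset.sum_sub_distrib]
  refine Finset.sum_congr rfl fun j hj => ?_
  ring

lemma main_id (k : ℕ) (hk : 1 ≤ k) (n : ℕ) :
    (2*(n:ℚ)+1)*((n:ℚ)*((n:ℚ)+1))^k
      = ∑ j ∈ Finset.range (k+1), (k.choose j : ℚ) *
          (2*(1-(-1:ℚ)^(k-j)) * (∑ q ∈ Finset.Icc 1 n, (q:ℚ)^(k+j+1))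
           + (1+(-1:ℚ)^(k-j)) * (∑ q ∈ Finset.Icc 1 n, (q:ℚ)^(k+j))) := by
  induction n with
  | zero =>
      have : k ≠ 0 := by omega
      simp [zero_pow this]
  | succ n ih =>
      have hIcc : ∀ m : ℕ, (∑ q ∈ Finset.Icc 1 (n+1), (q:ℚ)^m)
          = (∑ q ∈ Finset.Icc 1 n, (q:ℚ)^m) + ((n:ℚ)+1)^m := by
        intro m
        rw [Finset.sum_Icc_succ_top (by omega : 1 ≤ n+1)]
        push_cast
        ring
      simp only [hIcc]
      have expand : ∑ j ∈ Finset.range (k+1), (k.choose j : ℚ) *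
            (2*(1-(-1:ℚ)^(k-j)) * ((∑ q ∈ Finset.Icc 1 n, (q:ℚ)^(k+j+1)) + ((n:ℚ)+1)^(k+j+1))
             + (1+(-1:ℚ)^(k-j)) * ((∑ q ∈ Finset.Icc 1 n, (q:ℚ)^(k+j)) + ((n:ℚ)+1)^(k+j)))
          = (∑ j ∈ Finset.range (k+1), (k.choose j : ℚ) *
              (2*(1-(-1:ℚ)^(k-j)) * (∑ q ∈ Finset.Icc 1 n, (q:ℚ)^(k+j+1))
               + (1+(-1:ℚ)^(k-j)) * (∑ q ∈ Finset.Icc 1 n, (q:ℚ)^(k+j))))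
            + ∑ j ∈ Finset.range (k+1), (k.choose j : ℚ) *
              (2*(1-(-1:ℚ)^(k-j)) * ((n:ℚ)+1)^(k+j+1)
               + (1+(-1:ℚ)^(k-j)) * ((n:ℚ)+1)^(k+j)) := by
        rw [← Finset.sum_add_distrib]
        exact Finset.sum_congr rfl fun j _ => by ring
      rw [expand, ← ih, ← step_id k ((n:ℚ)+1)]
      push_cast
      ring

lemma jac_aux : ∀ k : ℕ, 1 ≤ k → ∃ G : Polynomial ℚ, ∀ n : ℕ, 1 ≤ n →
    (∑ q ∈ Finset.Icc 1 n, (q : ℚ) ^ (2 * k)) =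
      (2 * (n : ℚ) + 1) * G.eval ((n : ℚ) * ((n : ℚ) + 1)) := by
  intro k
  induction k using Nat.strong_induction_on with
  | _ k IH =>
    intro hk
    obtain ⟨k', rfl⟩ : ∃ k', k = k' + 1 := ⟨k - 1, by omega⟩
    have hH : ∀ j : ℕ, ∃ H : Polynomial ℚ, j ∈ Finset.range k' → ∀ n : ℕ, 1 ≤ n →
        ((k'+1).choose j : ℚ) *
          (2*(1-(-1:ℚ)^(k'+1-j)) * (∑ q ∈ Finset.Icc 1 n, (q:ℚ)^(k'+1+j+1))
           + (1+(-1:ℚ)^(k'+1-j)) * (∑ q ∈ Finset.Icc 1 n, (q:ℚ)^(k'+1+j)))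
        = (2*(n:ℚ)+1) * H.eval ((n:ℚ)*((n:ℚ)+1)) := by
      intro j
      by_cases hj : j ∈ Finset.range k'
      · have hjk : j < k' := Finset.mem_range.mp hj
        have hA := Nat.even_add (m := k'+1) (n := j)
        have hB := Nat.even_sub (show j ≤ k'+1 by omega)
        rcases Nat.even_or_odd (k'+1+j) with he | ho
        · -- even case: epsilon = 1
          have hEsub : Even (k'+1-j) := hB.mpr (hA.mp he)
          have hε : (-1:ℚ)^(k'+1-j) = 1 := hEsub.neg_one_pow
          obtain ⟨m, hm⟩ := he
          obtain ⟨G, hG⟩ := IH m (by omega) (by omega)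
          refine ⟨Polynomial.C (2*((k'+1).choose j : ℚ)) * G, fun _ n hn => ?_⟩
          have hexp : k'+1+j = 2*m := by omega
          rw [hexp, hε, Polynomial.eval_mul, Polynomial.eval_C, hG n hn]
          ring
        · -- odd case: epsilon = -1
          have hOsub : Odd (k'+1-j) := by
            have h1 : ¬ Even (k'+1+j) := Nat.not_even_iff_odd.mpr ho
            have h2 : ¬ Even (k'+1-j) := fun hE => h1 (hA.mpr (hB.mp hE))
            exact Nat.not_even_iff_odd.mp h2
          have hε : (-1:ℚ)^(k'+1-j) = -1 := hOsub.neg_one_pow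
          have hev : Even (k'+1+j+1) := by
            rcases ho with ⟨t, ht⟩
            exact ⟨t+1, by omega⟩
          obtain ⟨m, hm⟩ := hev
          obtain ⟨G, hG⟩ := IH m (by omega) (by omega)
          refine ⟨Polynomial.C (4*((k'+1).choose j : ℚ)) * G, fun _ n hn => ?_⟩
          have hexp : k'+1+j+1 = 2*m := by omega
          rw [hexp, hε, Polynomial.eval_mul, Polynomial.eval_C, hG n hn]
          ring
      · exact ⟨0, fun h => absurd h hj⟩
    choose H hH2 using hH
    refine ⟨Polynomial.C (1/(4*(k'+1:ℚ)+2)) *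
      (Polynomial.X^(k'+1) - ∑ j ∈ Finset.range k', H j), fun n hn => ?_⟩
    have hmain := main_id (k'+1) (by omega) n
    rw [Finset.sum_range_succ, Finset.sum_range_succ] at hmain
    have e1 : k'+1+(k'+1) = 2*(k'+1) := by omega
    have e2 : k'+1+k'+1 = 2*(k'+1) := by omega
    have e3 : k'+1-(k'+1) = 0 := by omega
    have e4 : k'+1-k' = 1 := by omega
    have e5 : (k'+1).choose (k'+1) = 1 := Nat.choose_self _
    have e6 : (k'+1).choose k' = k'+1 := Nat.choose_succ_self_right _
    rw [e1, e2, e3, e4, e5, e6] at hmain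
    have hsum : ∑ j ∈ Finset.range k', ((k'+1).choose j : ℚ) *
          (2*(1-(-1:ℚ)^(k'+1-j)) * (∑ q ∈ Finset.Icc 1 n, (q:ℚ)^(k'+1+j+1))
           + (1+(-1:ℚ)^(k'+1-j)) * (∑ q ∈ Finset.Icc 1 n, (q:ℚ)^(k'+1+j)))
        = (2*(n:ℚ)+1) * ∑ j ∈ Finset.range k', (H j).eval ((n:ℚ)*((n:ℚ)+1)) := by
      rw [Finset.mul_sum]
      exact Finset.sum_congr rfl fun j hj => hH2 j hj n hn
    rw [hsum] at hmain
    simp only [Polynomial.eval_mul, Polynomial.eval_C, Polynomial.eval_sub,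
      Polynomial.eval_pow, Polynomial.eval_X, Polynomial.eval_finset_sum]
    push_cast at hmain ⊢
    have h42 : (4*((k':ℚ)+1)+2) ≠ 0 := by positivity
    field_simp
    linear_combination -hmain

theorem jacobi (k : ℕ) (hk : 1 ≤ k) :
    ∃ G : Polynomial ℚ, ∀ n : ℕ, 1 ≤ n →
      (∑ q ∈ Finset.Icc 1 n, (q : ℚ) ^ (2 * k)) =
        (2 * (n : ℚ) + 1) * G.eval ((n : ℚ) * ((n : ℚ) + 1)) := by
  exact jac_aux k hk
end

section
/- For all integers n ≥ 1 and j ≥ 1, one has 2 · s_{0,j}(n) = j(n+1) · n^j, where s_{0,j}(n) is the sum s_{k,j}(n) with k = 0. -/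
open Polynomial Finset

lemma gauss_aux (n : ℕ) : 2 * ∑ i ∈ Finset.range n, (i + 1) = n * (n + 1) := by
  induction n with
  | zero => simp
  | succ m ih =>
    rw [Finset.sum_range_succ, Nat.mul_add, ih]
    ring

theorem two_mul_s_zero (n j : ℕ) (hn : 1 ≤ n) (hj : 1 ≤ j) :
    2 * s 0 j n = j * (n + 1) * n ^ j := by
  set Q : Polynomial ℕ := ∑ i ∈ Finset.range n, X ^ (i + 1) with hQ
  set P : Polynomial ℕ := Q ^ j with hP
  -- P = R^j * X^j with R = ∑ X^i
  have hfact : Q = (∑ i ∈ Finset.range n, (X : Polynomial ℕ) ^ i) * X := by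
    rw [Finset.sum_mul]
    exact Finset.sum_congr rfl fun i _ => by ring
  have hPfact : P = (∑ i ∈ Finset.range n, (X : Polynomial ℕ) ^ i) ^ j * X ^ j := by
    rw [hP, hfact, mul_pow]
  have hlow : ∀ m, m < j → P.coeff m = 0 := by
    intro m hm
    rw [hPfact, coeff_mul_X_pow']
    simp [Nat.not_le.mpr hm]
  have hQdeg : Q.natDegree ≤ n := by
    apply natDegree_sum_le_of_forall_le
    intro i hi
    calc (X ^ (i+1) : Polynomial ℕ).natDegree ≤ i + 1 := natDegree_X_pow_le _
      _ ≤ n := Finset.mem_range.mp hi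
  have hPdeg : P.natDegree ≤ j * n :=
    le_trans natDegree_pow_le (Nat.mul_le_mul_left _ hQdeg)
  have hjn : 1 ≤ j * n := Nat.one_le_iff_ne_zero.mpr (by positivity)
  -- s equals sum over Ico j (j*n+1) of coeff P m * m
  have hs : s 0 j n = ∑ m ∈ Finset.Ico j (j * n + 1), P.coeff m * m := by
    rw [Finset.sum_Ico_eq_sum_range]
    have hmul : j * (n - 1) + j = j * n := by
      cases n with
      | zero => omega
      | succ m => simp [Nat.mul_succ]
    have h1 : j * n + 1 - j = j * (n - 1) + 1 := by omega
    rw [h1]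
    unfold s
    apply Finset.sum_congr rfl
    intro q _
    have hC : C n j q = P.coeff (q + j) := rfl
    rw [hC, pow_one, Nat.add_comm q j]
  -- derivative evaluation
  have hdeg' : (derivative P).natDegree < j * n := by
    have := natDegree_derivative_le P
    omega
  have heval : (derivative P).eval 1 = ∑ m ∈ Finset.range (j * n), P.coeff (m + 1) * (m + 1) := by
    rw [eval_eq_sum_range' hdeg' 1]
    apply Finset.sum_congr rfl
    intro m _
    rw [coeff_derivative]
    push_cast
    ring
  have heval2 : (derivative P).eval 1 = ∑ m ∈ Finset.Ico j (j * n + 1), P.coeff m * m := by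
    rw [heval]
    have h2 : ∑ m ∈ Finset.range (j * n), P.coeff (m + 1) * (m + 1)
        = ∑ m ∈ Finset.Ico 1 (j * n + 1), P.coeff m * m := by
      rw [Finset.sum_Ico_eq_sum_range]
      simp [Nat.add_comm]
    rw [h2, ← Finset.sum_Ico_consecutive (fun m => P.coeff m * m) hj
      (by nlinarith : j ≤ j * n + 1)]
    have h4 : ∑ m ∈ Finset.Ico 1 j, P.coeff m * m = 0 :=
      Finset.sum_eq_zero fun m hm => by rw [hlow m (Finset.mem_Ico.mp hm).2]; ring
    rw [h4, zero_add]
  -- compute eval of derivative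
  have hQeval : Q.eval 1 = n := by
    rw [hQ, eval_finset_sum]
    simp
  have hQ'eval : (derivative Q).eval 1 = ∑ i ∈ Finset.range n, (i + 1) := by
    rw [hQ, map_sum]
    rw [eval_finset_sum]
    apply Finset.sum_congr rfl
    intro i _
    rw [derivative_X_pow]
    simp
  have hval : (derivative P).eval 1 = j * n ^ (j - 1) * ∑ i ∈ Finset.range n, (i + 1) := by
    rw [hP, derivative_pow, eval_mul, eval_mul, eval_C, eval_pow, hQeval, hQ'eval]
    push_cast
    ring
  have hgauss := gauss_aux n
  have : 2 * s 0 j n = j * n ^ (j - 1) * (n * (n + 1)) := by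
    rw [hs, ← heval2, hval]
    rw [← hgauss]; ring
  rw [this]
  have hpow : n ^ (j - 1) * n = n ^ j := by
    rw [← pow_succ]
    congr 1
    omega
  calc j * n ^ (j - 1) * (n * (n + 1)) = j * (n + 1) * (n ^ (j - 1) * n) := by ring
    _ = j * (n + 1) * n ^ j := by rw [hpow]
end
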